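/- Let f₁, f₂ : [0,∞) → [0,∞) be convex continuous functions with f₁ ≤ f₂, and let ρ and g be defined as in the context. If x₀ > 0 satisfies x₀ ≤ ρ and g(x₀) < f₂(x₀), then g(x₀) − x₀·∂₊g(x₀) ≥ 0. -/
import Mathlib


/-- The right derivative `∂₊f(x)` of `f` at `x`. -/
noncomputable def rightDer (f : ℝ → ℝ) (x : ℝ) : ℝ := derivWithin f (Set.Ioi x) x


lemma rightDer_affine (c a x : ℝ) : rightDer (fun y => c + a * y) x = a := by
  unfold rightDer
  have h : HasDerivWithinAt (fun y : ℝ => c + a * y) (a * 1) (Set.Ioi x) x :=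
    (((hasDerivAt_id x).const_mul a).const_add c).hasDerivWithinAt
  simpa using h.derivWithin (uniqueDiffWithinAt_Ioi x)

/-- `A := inf{y > 0 : (f₂(y) − f₁(0))/y ≤ ∂₊f₂(y)}` if `f₁(0) < f₂(0)` (with `inf ∅ = ∞`),
and `A := 0` if `f₁(0) = f₂(0)`. -/
noncomputable def gameA (f₁ f₂ : ℝ → ℝ) : EReal :=
  if f₁ 0 < f₂ 0 then
    sInf ((fun y : ℝ => (y : EReal)) '' {y : ℝ | 0 < y ∧ (f₂ y - f₁ 0) / y ≤ rightDer f₂ y})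
  else 0

/-- `β := (f₂(A) − f₁(0))/A` if `f₁(0) < f₂(0)` and `A < ∞`, `β := ∞` if `f₁(0) < f₂(0)` and
`A = ∞`, and `β := ∂₊f₂(0)` if `f₁(0) = f₂(0)`. -/
noncomputable def gameBeta (f₁ f₂ : ℝ → ℝ) : EReal :=
  if f₁ 0 < f₂ 0 then
    if gameA f₁ f₂ = ⊤ then (⊤ : EReal)
    else (((f₂ ((gameA f₁ f₂).toReal) - f₁ 0) / (gameA f₁ f₂).toReal : ℝ) : EReal)
  else ((rightDer f₂ 0 : ℝ) : EReal)

/-- `ρ := inf{t ≥ 0 : ∂₊f₂(t) > m}` (with `inf ∅ = ∞`). -/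
noncomputable def gameRho (f₂ : ℝ → ℝ) (m : EReal) : EReal :=
  sInf ((fun t : ℝ => (t : EReal)) '' {t : ℝ | 0 ≤ t ∧ m < (rightDer f₂ t : EReal)})

/-- The function `g` defined by
`g(x) = (f₁(0) + βx)·1_{x<A} + f₂(x)·1_{A≤x<ρ} + (f₂(ρ) + m·(x−ρ))·1_{x≥ρ}` if `β < m`,
and `g(x) = f₁(0) + m·x` if `m ≤ β`. -/
noncomputable def gameG (f₁ f₂ : ℝ → ℝ) (m : EReal) (x : ℝ) : ℝ :=
  if gameBeta f₁ f₂ < m then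
    if (x : EReal) < gameA f₁ f₂ then f₁ 0 + (gameBeta f₁ f₂).toReal * x
    else if (x : EReal) < gameRho f₂ m then f₂ x
    else f₂ ((gameRho f₂ m).toReal) + m.toReal * (x - (gameRho f₂ m).toReal)
  else f₁ 0 + m.toReal * x

/-- The set `ℍ = ℍ(f₁,f₂)` of continuous functions `h : [0,∞) → ℝ` with `f₁ ≤ h ≤ f₂` that are
concave on every interval on which `h < f₂`. -/
def memH (f₁ f₂ h : ℝ → ℝ) : Prop :=
  ContinuousOn h (Set.Ici 0) ∧
  (∀ x ∈ Set.Ici (0 : ℝ), f₁ x ≤ h x ∧ h x ≤ f₂ x) ∧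
  ∀ D : Set ℝ, D ⊆ Set.Ici 0 → D.OrdConnected → (∀ x ∈ D, h x < f₂ x) → ConcaveOn ℝ D h

/-- For convex continuous `f₁ ≤ f₂ : [0,∞) → [0,∞)` and `ρ, g` as above: if
`x₀ > 0` satisfies `x₀ ≤ ρ` and `g(x₀) < f₂(x₀)`, then `g(x₀) − x₀·∂₊g(x₀) ≥ 0`. -/
theorem stmt10 (f₁ f₂ : ℝ → ℝ)
    (hf₁conv : ConvexOn ℝ (Set.Ici 0) f₁) (hf₂conv : ConvexOn ℝ (Set.Ici 0) f₂)
    (hf₁cont : ContinuousOn f₁ (Set.Ici 0)) (hf₂cont : ContinuousOn f₂ (Set.Ici 0))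
    (hf₁nonneg : ∀ x ∈ Set.Ici (0 : ℝ), 0 ≤ f₁ x) (hf₂nonneg : ∀ x ∈ Set.Ici (0 : ℝ), 0 ≤ f₂ x)
    (hle : ∀ x ∈ Set.Ici (0 : ℝ), f₁ x ≤ f₂ x)
    (m : EReal) (hm_ne_bot : m ≠ ⊥)
    (hm : Filter.Tendsto (fun t : ℝ => ((rightDer f₁ t : ℝ) : EReal)) Filter.atTop (nhds m))
    (x₀ : ℝ) (hx₀ : 0 < x₀) (hx₀rho : (x₀ : EReal) ≤ gameRho f₂ m)
    (hgf₂ : gameG f₁ f₂ m x₀ < f₂ x₀) :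
    0 ≤ gameG f₁ f₂ m x₀ - x₀ * rightDer (gameG f₁ f₂ m) x₀ := by
  by_cases hβm : gameBeta f₁ f₂ < m
  · by_cases hA : (x₀ : EReal) < gameA f₁ f₂
    · have hopen : IsOpen {x : ℝ | (x : EReal) < gameA f₁ f₂} :=
        isOpen_Iio.preimage continuous_coe_real_ereal
      have hmem : x₀ ∈ {x : ℝ | (x : EReal) < gameA f₁ f₂} := hA
      have hev : gameG f₁ f₂ m =ᶠ[nhdsWithin x₀ (Set.Ioi x₀)]
          (fun y => f₁ 0 + (gameBeta f₁ f₂).toReal * y) := by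
        filter_upwards [mem_nhdsWithin_of_mem_nhds (hopen.mem_nhds hmem)] with y hy
        simp [gameG, hβm, hy]
      have hder : rightDer (gameG f₁ f₂ m) x₀ = (gameBeta f₁ f₂).toReal := by
        unfold rightDer
        rw [hev.derivWithin_eq (by simp [gameG, hβm, hA])]
        exact rightDer_affine _ _ _
      have hg : gameG f₁ f₂ m x₀ = f₁ 0 + (gameBeta f₁ f₂).toReal * x₀ := by
        simp [gameG, hβm, hA]
      rw [hder, hg]
      have h0 := hf₁nonneg 0 Set.self_mem_Ici
      nlinarith
    · exfalso
      by_cases hρ : (x₀ : EReal) < gameRho f₂ m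
      · have hg : gameG f₁ f₂ m x₀ = f₂ x₀ := by simp [gameG, hβm, hA, hρ]
        rw [hg] at hgf₂; exact lt_irrefl _ hgf₂
      · have hρeq : gameRho f₂ m = (x₀ : EReal) := le_antisymm (not_lt.1 hρ) hx₀rho
        have hg : gameG f₁ f₂ m x₀ = f₂ x₀ := by
          simp [gameG, hβm, hA, hρ, hρeq]
        rw [hg] at hgf₂; exact lt_irrefl _ hgf₂
  · have hg : gameG f₁ f₂ m = fun x => f₁ 0 + m.toReal * x := by
      funext x; simp [gameG, hβm]
    rw [hg, rightDer_affine]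
    have h0 := hf₁nonneg 0 Set.self_mem_Ici
    show 0 ≤ f₁ 0 + m.toReal * x₀ - x₀ * m.toReal
    nlinarith [mul_comm m.toReal x₀]
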